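/- Weak diamond property of the λ!-calculus: if t →_{p1} t1 and t →_{p2} t2 with t1 ≠ t2, where p1, p2 ∈ {dB, s!, d!} name the root rule used and the steps are weak reduction steps, then there exists a term t3 such that t1 →_{p2} t3 and t2 →_{p1} t3. -/
import Mathlib


/-! # The Bang Calculus Revisited: common definitions.

Terms are represented with de Bruijn indices, so that all the meta-level
substitutions are capture-avoiding by construction. -/

/-- Terms of the λ!-calculus.  `esub t u` is the explicit substitution
`t[0\u]`: the (anonymous) binder scopes over `t`, not over `u`. -/
inductive Tm : Type
  | var : ℕ → Tm
  | app : Tm → Tm → Tm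
  | lam : Tm → Tm
  | bang : Tm → Tm
  | der : Tm → Tm
  | esub : Tm → Tm → Tm
  deriving DecidableEq

namespace Tm

/-- lifting a renaming under a binder -/
def liftR (f : ℕ → ℕ) : ℕ → ℕ
  | 0 => 0
  | k + 1 => f k + 1

/-- renaming of free variables -/
def rename (f : ℕ → ℕ) : Tm → Tm
  | var k => var (f k)
  | app t u => app (rename f t) (rename f u)
  | lam t => lam (rename (liftR f) t)
  | bang t => bang (rename f t)
  | der t => der (rename f t)
  | esub t u => esub (rename (liftR f) t) (rename f u)

/-- lifting a simultaneous substitution under a binder -/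
def liftS (σ : ℕ → Tm) : ℕ → Tm
  | 0 => var 0
  | k + 1 => rename (· + 1) (σ k)

/-- simultaneous (capture-avoiding) substitution -/
def subst (σ : ℕ → Tm) : Tm → Tm
  | var k => σ k
  | app t u => app (subst σ t) (subst σ u)
  | lam t => lam (subst (liftS σ) t)
  | bang t => bang (subst σ t)
  | der t => der (subst σ t)
  | esub t u => esub (subst (liftS σ) t) (subst σ u)

/-- capture-avoiding substitution of `u` for the variable `0` of `t`,
where the result is placed under `n` extra binders (and `u` already lives
at that depth). -/
def substIn (n : ℕ) (u : Tm) (t : Tm) : Tm :=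
  subst (fun k => match k with
    | 0 => u
    | k + 1 => var (k + n)) t

/-- capture-avoiding meta-level substitution `t{0 := u}` -/
def subst0 (u : Tm) (t : Tm) : Tm := substIn 0 u t

/-- plugging a term into a list context `L ::= ◻ | L[x\t]`; the head of the
list is the argument of the outermost explicit substitution. -/
def plug : List Tm → Tm → Tm
  | [], s => s
  | e :: L, s => esub (plug L s) e

/-- the w-size of a term -/
def wsize : Tm → ℕ
  | var _ => 0
  | app t u => 1 + wsize t + wsize u
  | lam t => 1 + wsize t
  | bang _ => 0
  | der t => 1 + wsize t
  | esub t u => 1 + wsize t + wsize u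

end Tm

/-- the names of the three rewriting rules of the λ!-calculus -/
inductive Rule : Type
  | dB | sb | db
  deriving DecidableEq

open Tm in
/-- the three rewriting rules, applied at the root (at a distance) -/
inductive Root : Rule → Tm → Tm → Prop
  | dB (L : List Tm) (t u : Tm) :
      Root .dB (app (plug L (lam t)) u)
               (plug L (esub t (rename (· + L.length) u)))
  | sb (L : List Tm) (t u : Tm) :
      Root .sb (esub t (plug L (bang u))) (plug L (substIn L.length u t))
  | db (L : List Tm) (t : Tm) :
      Root .db (der (plug L (bang t))) (plug L t)

/-- closure of each rule under weak contexts (no reduction under `bang`) -/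
inductive Step : Rule → Tm → Tm → Prop
  | root {r : Rule} {t t' : Tm} : Root r t t' → Step r t t'
  | appL {r t t'} (u : Tm) : Step r t t' → Step r (Tm.app t u) (Tm.app t' u)
  | appR {r u u'} (t : Tm) : Step r u u' → Step r (Tm.app t u) (Tm.app t u')
  | lam {r t t'} : Step r t t' → Step r (Tm.lam t) (Tm.lam t')
  | der {r t t'} : Step r t t' → Step r (Tm.der t) (Tm.der t')
  | esubL {r t t'} (u : Tm) : Step r t t' → Step r (Tm.esub t u) (Tm.esub t' u)
  | esubR {r u u'} (t : Tm) : Step r u u' → Step r (Tm.esub t u) (Tm.esub t u')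

/-- the weak reduction `→w` of the λ!-calculus -/
def StepW (t t' : Tm) : Prop := ∃ r, Step r t t'

/-- counted weak reduction: `RedCnt t (b, e) u` holds iff `t →w* u` using `b`
dB-steps and `e` steps of kind s!/d!. -/
inductive RedCnt : Tm → ℕ × ℕ → Tm → Prop
  | refl (t : Tm) : RedCnt t (0, 0) t
  | db {t t₁ u : Tm} {b e : ℕ} :
      Step .dB t t₁ → RedCnt t₁ (b, e) u → RedCnt t (b + 1, e) u
  | ex {t t₁ u : Tm} {b e : ℕ} :
      (Step .sb t t₁ ∨ Step .db t t₁) → RedCnt t₁ (b, e) u →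
      RedCnt t (b, e + 1) u

mutual
  /-- neutral w-normal terms -/
  inductive NeW : Tm → Prop
    | var (k : ℕ) : NeW (Tm.var k)
    | app {t u : Tm} : NaW t → NoW u → NeW (Tm.app t u)
    | der {t : Tm} : NbW t → NeW (Tm.der t)
    | esub {t u : Tm} : NeW t → NbW u → NeW (Tm.esub t u)
  /-- neutral-abs w-normal terms -/
  inductive NaW : Tm → Prop
    | bang (t : Tm) : NaW (Tm.bang t)
    | ne {t : Tm} : NeW t → NaW t
    | esub {t u : Tm} : NaW t → NbW u → NaW (Tm.esub t u)
  /-- neutral-bang w-normal terms -/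
  inductive NbW : Tm → Prop
    | ne {t : Tm} : NeW t → NbW t
    | lam {t : Tm} : NoW t → NbW (Tm.lam t)
    | esub {t u : Tm} : NbW t → NbW u → NbW (Tm.esub t u)
  /-- w-normal terms -/
  inductive NoW : Tm → Prop
    | na {t : Tm} : NaW t → NoW t
    | nb {t : Tm} : NbW t → NoW t
end

/-- clashes -/
inductive Clash : Tm → Prop
  | appBang (L : List Tm) (t u : Tm) : Clash (Tm.app (Tm.plug L (Tm.bang t)) u)
  | esubLam (L : List Tm) (t u : Tm) : Clash (Tm.esub t (Tm.plug L (Tm.lam u)))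
  | derLam (L : List Tm) (u : Tm) : Clash (Tm.der (Tm.plug L (Tm.lam u)))
  | appLam (L : List Tm) (t u : Tm) : Clash (Tm.app t (Tm.plug L (Tm.lam u)))

/-- `WSub t s` holds iff `t = W⟨s⟩` for some weak context `W` -/
inductive WSub : Tm → Tm → Prop
  | refl (t : Tm) : WSub t t
  | appL {t s : Tm} (u : Tm) : WSub t s → WSub (Tm.app t u) s
  | appR {u s : Tm} (t : Tm) : WSub u s → WSub (Tm.app t u) s
  | lam {t s : Tm} : WSub t s → WSub (Tm.lam t) s
  | der {t s : Tm} : WSub t s → WSub (Tm.der t) s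
  | esubL {t s : Tm} (u : Tm) : WSub t s → WSub (Tm.esub t u) s
  | esubR {u s : Tm} (t : Tm) : WSub u s → WSub (Tm.esub t u) s

/-- weak clash freeness -/
def Wcf (t : Tm) : Prop := ¬ ∃ s, WSub t s ∧ Clash s

mutual
  /-- neutral weak clash free normal terms -/
  inductive NeCF : Tm → Prop
    | var (k : ℕ) : NeCF (Tm.var k)
    | app {t u : Tm} : NeCF t → NaCF u → NeCF (Tm.app t u)
    | der {t : Tm} : NeCF t → NeCF (Tm.der t)
    | esub {t u : Tm} : NeCF t → NeCF u → NeCF (Tm.esub t u)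
  /-- neutral-abs weak clash free normal terms -/
  inductive NaCF : Tm → Prop
    | bang (t : Tm) : NaCF (Tm.bang t)
    | ne {t : Tm} : NeCF t → NaCF t
    | esub {t u : Tm} : NaCF t → NeCF u → NaCF (Tm.esub t u)
  /-- neutral-bang weak clash free normal terms -/
  inductive NbCF : Tm → Prop
    | ne {t : Tm} : NeCF t → NbCF t
    | lam {t : Tm} : NoCF t → NbCF (Tm.lam t)
    | esub {t u : Tm} : NbCF t → NeCF u → NbCF (Tm.esub t u)
  /-- weak clash free normal terms -/
  inductive NoCF : Tm → Prop
    | na {t : Tm} : NaCF t → NoCF t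
    | nb {t : Tm} : NbCF t → NoCF t
end

/-- Types of system 𝒰: base types, multiset types and arrow types.  A
multiset type is given by a list of types (a representative of the multiset
it determines). -/
inductive Ty : Type
  | base : ℕ → Ty
  | mult : List Ty → Ty
  | arr : List Ty → Ty → Ty

/-- typing contexts: functions from (de Bruijn) variables to multiset types -/
abbrev Ctx := ℕ → Multiset Ty

/-- the context mapping `k` to `M` and anything else to the empty multiset -/
def Ctx.single (k : ℕ) (M : Multiset Ty) : Ctx := fun j => if j = k then M else 0

/-- removing the (type of the) bound variable `0` from a context -/
def Ctx.tail (Γ : Ctx) : Ctx := fun k => Γ (k + 1)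

/-- extending a context with a multiset type for a fresh variable `0` -/
def Ctx.cons (M : Multiset Ty) (Γ : Ctx) : Ctx := fun k =>
  match k with
  | 0 => M
  | k + 1 => Γ k

/-- Sized typing of system 𝒰: `DerU Γ t τ n` means that there is a derivation
of `Γ ⊢ t : τ` whose size (number of rules, not counting `bg`) is `n`. -/
inductive DerU : Ctx → Tm → Ty → ℕ → Prop
  | ax (k : ℕ) (σ : Ty) : DerU (Ctx.single k {σ}) (Tm.var k) σ 1
  | app {Γ Δ : Ctx} {t u : Tm} {M : List Ty} {τ : Ty} {n m : ℕ} :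
      DerU Γ t (Ty.arr M τ) n → DerU Δ u (Ty.mult M) m →
      DerU (Γ + Δ) (Tm.app t u) τ (n + m + 1)
  | abs {Γ : Ctx} {t : Tm} {τ : Ty} {n : ℕ} (M : List Ty) :
      DerU Γ t τ n → Multiset.ofList M = Γ 0 →
      DerU (Ctx.tail Γ) (Tm.lam t) (Ty.arr M τ) (n + 1)
  | es {Γ Δ : Ctx} {t u : Tm} {σ : Ty} {M : List Ty} {n m : ℕ} :
      DerU Γ t σ n → DerU Δ u (Ty.mult M) m → Multiset.ofList M = Γ 0 →
      DerU (Ctx.tail Γ + Δ) (Tm.esub t u) σ (n + m + 1)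
  | bg {t : Tm} (prs : List (Ctx × Ty × ℕ)) :
      (∀ p ∈ prs, DerU p.1 t p.2.1 p.2.2) →
      DerU ((prs.map (·.1)).sum) (Tm.bang t)
           (Ty.mult (prs.map (·.2.1))) ((prs.map (·.2.2)).sum)
  | dr {Γ : Ctx} {t : Tm} {σ : Ty} {n : ℕ} :
      DerU Γ t (Ty.mult [σ]) n → DerU Γ (Tm.der t) σ (n + 1)

/-! ## The source λ-calculus with explicit substitutions (CBN / CBV) -/

/-- terms of the λ-calculus with explicit substitutions (de Bruijn) -/
inductive Lm : Type
  | var : ℕ → Lm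
  | app : Lm → Lm → Lm
  | lam : Lm → Lm
  | esub : Lm → Lm → Lm
  deriving DecidableEq

namespace Lm

def liftR (f : ℕ → ℕ) : ℕ → ℕ
  | 0 => 0
  | k + 1 => f k + 1

def rename (f : ℕ → ℕ) : Lm → Lm
  | var k => var (f k)
  | app t u => app (rename f t) (rename f u)
  | lam t => lam (rename (liftR f) t)
  | esub t u => esub (rename (liftR f) t) (rename f u)

def liftS (σ : ℕ → Lm) : ℕ → Lm
  | 0 => var 0
  | k + 1 => rename (· + 1) (σ k)

def subst (σ : ℕ → Lm) : Lm → Lm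
  | var k => σ k
  | app t u => app (subst σ t) (subst σ u)
  | lam t => lam (subst (liftS σ) t)
  | esub t u => esub (subst (liftS σ) t) (subst σ u)

def substIn (n : ℕ) (u : Lm) (t : Lm) : Lm :=
  subst (fun k => match k with
    | 0 => u
    | k + 1 => var (k + n)) t

/-- capture-avoiding meta-level substitution `t{0 := u}` -/
def subst0 (u : Lm) (t : Lm) : Lm := substIn 0 u t

def plug : List Lm → Lm → Lm
  | [], s => s
  | e :: L, s => esub (plug L s) e

/-- values -/
def IsVal : Lm → Prop
  | var _ => True
  | lam _ => True
  | _ => False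

/-- the n-size of a term -/
def nsize : Lm → ℕ
  | var _ => 0
  | lam t => 1 + nsize t
  | app t _ => 1 + nsize t
  | esub t _ => 1 + nsize t

/-- the v-size of a term -/
def vsize : Lm → ℕ
  | var _ => 0
  | lam _ => 0
  | app t u => 1 + vsize t + vsize u
  | esub t u => 1 + vsize t + vsize u

end Lm

/-- names of the CBN rules -/
inductive NRule : Type
  | dB | s
  deriving DecidableEq

/-- call-by-name reduction (closure of dB and s under CBN contexts) -/
inductive StepN : NRule → Lm → Lm → Prop
  | dB (L : List Lm) (t u : Lm) :
      StepN .dB (Lm.app (Lm.plug L (Lm.lam t)) u)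
                (Lm.plug L (Lm.esub t (Lm.rename (· + L.length) u)))
  | s (t u : Lm) : StepN .s (Lm.esub t u) (Lm.subst0 u t)
  | appL {r t t'} (u : Lm) : StepN r t t' → StepN r (Lm.app t u) (Lm.app t' u)
  | lam {r t t'} : StepN r t t' → StepN r (Lm.lam t) (Lm.lam t')
  | esubL {r t t'} (u : Lm) : StepN r t t' → StepN r (Lm.esub t u) (Lm.esub t' u)

/-- names of the CBV rules -/
inductive VRule : Type
  | dB | sv
  deriving DecidableEq

/-- call-by-value reduction (closure of dB and sv under CBV contexts) -/
inductive StepV : VRule → Lm → Lm → Prop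
  | dB (L : List Lm) (t u : Lm) :
      StepV .dB (Lm.app (Lm.plug L (Lm.lam t)) u)
                (Lm.plug L (Lm.esub t (Lm.rename (· + L.length) u)))
  | sv (L : List Lm) (t v : Lm) (hv : Lm.IsVal v) :
      StepV .sv (Lm.esub t (Lm.plug L v)) (Lm.plug L (Lm.substIn L.length v t))
  | appL {r t t'} (u : Lm) : StepV r t t' → StepV r (Lm.app t u) (Lm.app t' u)
  | appR {r u u'} (t : Lm) : StepV r u u' → StepV r (Lm.app t u) (Lm.app t u')
  | esubL {r t t'} (u : Lm) : StepV r t t' → StepV r (Lm.esub t u) (Lm.esub t' u)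
  | esubR {r u u'} (t : Lm) : StepV r u u' → StepV r (Lm.esub t u) (Lm.esub t u')

mutual
  /-- CBN neutral terms -/
  inductive NeN : Lm → Prop
    | var (k : ℕ) : NeN (Lm.var k)
    | app {t : Lm} (u : Lm) : NeN t → NeN (Lm.app t u)
  /-- CBN normal terms -/
  inductive NoN : Lm → Prop
    | lam {t : Lm} : NoN t → NoN (Lm.lam t)
    | ne {t : Lm} : NeN t → NoN t
end

mutual
  /-- CBV (substituted) variables -/
  inductive VrV : Lm → Prop
    | var (k : ℕ) : VrV (Lm.var k)
    | esub {t u : Lm} : VrV t → NeV u → VrV (Lm.esub t u)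
  /-- CBV neutral terms -/
  inductive NeV : Lm → Prop
    | app₁ {t u : Lm} : VrV t → NoV u → NeV (Lm.app t u)
    | app₂ {t u : Lm} : NeV t → NoV u → NeV (Lm.app t u)
    | esub {t u : Lm} : NeV t → NeV u → NeV (Lm.esub t u)
  /-- CBV normal terms -/
  inductive NoV : Lm → Prop
    | lam (t : Lm) : NoV (Lm.lam t)
    | vr {t : Lm} : VrV t → NoV t
    | ne {t : Lm} : NeV t → NoV t
    | esub {t u : Lm} : NoV t → NeV u → NoV (Lm.esub t u)
end

/-- counted CBN reduction, recording the number of dB- and s-steps -/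
inductive RedCntN : Lm → ℕ × ℕ → Lm → Prop
  | refl (t : Lm) : RedCntN t (0, 0) t
  | db {t t₁ u : Lm} {b e : ℕ} :
      StepN .dB t t₁ → RedCntN t₁ (b, e) u → RedCntN t (b + 1, e) u
  | s {t t₁ u : Lm} {b e : ℕ} :
      StepN .s t t₁ → RedCntN t₁ (b, e) u → RedCntN t (b, e + 1) u

/-- counted CBV reduction, recording the number of dB- and sv-steps -/
inductive RedCntV : Lm → ℕ × ℕ → Lm → Prop
  | refl (t : Lm) : RedCntV t (0, 0) t
  | db {t t₁ u : Lm} {b e : ℕ} :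
      StepV .dB t t₁ → RedCntV t₁ (b, e) u → RedCntV t (b + 1, e) u
  | sv {t t₁ u : Lm} {b e : ℕ} :
      StepV .sv t t₁ → RedCntV t₁ (b, e) u → RedCntV t (b, e + 1) u

/-- the CBN embedding into the λ!-calculus -/
def cbn : Lm → Tm
  | .var k => .var k
  | .lam t => .lam (cbn t)
  | .app t u => .app (cbn t) (.bang (cbn u))
  | .esub t u => .esub (cbn t) (.bang (cbn u))

/-- `deBang t = some s'` iff `t = L⟨!s⟩` and `s' = L⟨s⟩` -/
def deBang : Tm → Option Tm
  | .bang s => some s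
  | .esub t e => (deBang t).map (fun s => Tm.esub s e)
  | _ => none

/-- the CBV embedding into the λ!-calculus -/
def cbv : Lm → Tm
  | .var k => .bang (.var k)
  | .lam t => .bang (.lam (cbv t))
  | .app t u =>
      match deBang (cbv t) with
      | some r => Tm.app r (cbv u)
      | none => Tm.app (.der (cbv t)) (cbv u)
  | .esub t u => .esub (cbv t) (cbv u)

/-- Sized typing of system 𝒩 (call-by-name): `DerN Γ t τ n` means that there
is a derivation of `Γ ⊢ t : τ` of size `n` (counting all rules). -/
inductive DerN : Ctx → Lm → Ty → ℕ → Prop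
  | ax (k : ℕ) (σ : Ty) : DerN (Ctx.single k {σ}) (Lm.var k) σ 1
  | app {Γ : Ctx} {t u : Lm} {τ : Ty} {n : ℕ} (prs : List (Ctx × Ty × ℕ)) :
      DerN Γ t (Ty.arr (prs.map (·.2.1)) τ) n →
      (∀ p ∈ prs, DerN p.1 u p.2.1 p.2.2) →
      DerN (Γ + (prs.map (·.1)).sum) (Lm.app t u) τ
           (n + (prs.map (·.2.2)).sum + 1)
  | abs {Γ : Ctx} {t : Lm} {τ : Ty} {n : ℕ} (M : List Ty) :
      DerN Γ t τ n → Multiset.ofList M = Γ 0 →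
      DerN (Ctx.tail Γ) (Lm.lam t) (Ty.arr M τ) (n + 1)
  | es {Γ : Ctx} {t u : Lm} {τ : Ty} {n : ℕ} (prs : List (Ctx × Ty × ℕ)) :
      DerN Γ t τ n →
      Multiset.ofList (prs.map (·.2.1)) = Γ 0 →
      (∀ p ∈ prs, DerN p.1 u p.2.1 p.2.2) →
      DerN (Ctx.tail Γ + (prs.map (·.1)).sum) (Lm.esub t u) τ
           (n + (prs.map (·.2.2)).sum + 1)

/-- Sized typing of system 𝒱 (call-by-value): `DerV Γ t τ n` means that there
is a derivation of `Γ ⊢ t : τ` of size `n` (each rule counts 1, except that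
`ax` counts the cardinal of its multiset and `abs` contributes the sizes of
its premises plus the number of premises). -/
inductive DerV : Ctx → Lm → Ty → ℕ → Prop
  | ax (k : ℕ) (M : List Ty) :
      DerV (Ctx.single k (Multiset.ofList M)) (Lm.var k) (Ty.mult M) M.length
  | es {Γ Δ : Ctx} {t u : Lm} {σ : Ty} {M : List Ty} {n m : ℕ} :
      DerV Γ t σ n → DerV Δ u (Ty.mult M) m → Multiset.ofList M = Γ 0 →
      DerV (Ctx.tail Γ + Δ) (Lm.esub t u) σ (n + m + 1)
  | abs {t : Lm} (prs : List (Ctx × List Ty × Ty × ℕ)) :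
      (∀ p ∈ prs, DerV p.1 t p.2.2.1 p.2.2.2) →
      (∀ p ∈ prs, Multiset.ofList p.2.1 = p.1 0) →
      DerV ((prs.map (fun p => Ctx.tail p.1)).sum) (Lm.lam t)
           (Ty.mult (prs.map (fun p => Ty.arr p.2.1 p.2.2.1)))
           ((prs.map (·.2.2.2)).sum + prs.length)
  | app {Γ Δ : Ctx} {t u : Lm} {M : List Ty} {τ : Ty} {n m : ℕ} :
      DerV Γ t (Ty.mult [Ty.arr M τ]) n → DerV Δ u (Ty.mult M) m →
      DerV (Γ + Δ) (Lm.app t u) τ (n + m + 1)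

/-! ## Auxiliary lemmas for the weak diamond property -/

namespace Tm

theorem liftR_ext {f g : ℕ → ℕ} (h : ∀ k, f k = g k) : ∀ k, liftR f k = liftR g k := by
  intro k; cases k <;> simp [liftR, h]

theorem rename_ext {f g : ℕ → ℕ} (h : ∀ k, f k = g k) : ∀ t, rename f t = rename g t := by
  intro t
  induction t generalizing f g with
  | var k => simp [rename, h]
  | app a b iha ihb => simp [rename, iha h, ihb h]
  | lam a ih => simp [rename, ih (liftR_ext h)]
  | bang a ih => simp [rename, ih h]
  | der a ih => simp [rename, ih h]
  | esub a b iha ihb => simp [rename, iha (liftR_ext h), ihb h]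

theorem liftR_liftR (f g : ℕ → ℕ) (k : ℕ) :
    liftR f (liftR g k) = liftR (fun j => f (g j)) k := by
  cases k <;> simp [liftR]

theorem rename_rename (f g : ℕ → ℕ) (t : Tm) :
    rename f (rename g t) = rename (fun k => f (g k)) t := by
  induction t generalizing f g with
  | var k => rfl
  | app a b iha ihb => simp [rename, iha, ihb]
  | lam a ih => simp [rename, ih]; exact rename_ext (liftR_liftR f g) a
  | bang a ih => simp [rename, ih]
  | der a ih => simp [rename, ih]
  | esub a b iha ihb =>
      simp [rename, iha, ihb]; exact rename_ext (liftR_liftR f g) a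

theorem rename_id (t : Tm) : rename (fun k => k) t = t := by
  induction t with
  | var k => rfl
  | app a b iha ihb => simp [rename, iha, ihb]
  | lam a ih => simp [rename]; rw [rename_ext (f := liftR fun k => k) (g := fun k => k) (fun k => by cases k <;> simp [liftR]) a, ih]
  | bang a ih => simp [rename, ih]
  | der a ih => simp [rename, ih]
  | esub a b iha ihb =>
      simp [rename, ihb]
      rw [rename_ext (f := liftR fun k => k) (g := fun k => k) (fun k => by cases k <;> simp [liftR]) a, iha]

theorem liftS_ext {σ τ : ℕ → Tm} (h : ∀ k, σ k = τ k) : ∀ k, liftS σ k = liftS τ k := by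
  intro k; cases k <;> simp [liftS, h]

theorem subst_ext {σ τ : ℕ → Tm} (h : ∀ k, σ k = τ k) : ∀ t, subst σ t = subst τ t := by
  intro t
  induction t generalizing σ τ with
  | var k => simp [subst, h]
  | app a b iha ihb => simp [subst, iha h, ihb h]
  | lam a ih => simp [subst, ih (liftS_ext h)]
  | bang a ih => simp [subst, ih h]
  | der a ih => simp [subst, ih h]
  | esub a b iha ihb => simp [subst, iha (liftS_ext h), ihb h]

theorem liftS_liftR (σ : ℕ → Tm) (f : ℕ → ℕ) (k : ℕ) :
    liftS σ (liftR f k) = liftS (fun j => σ (f j)) k := by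
  cases k <;> simp [liftS, liftR]

theorem subst_rename (σ : ℕ → Tm) (f : ℕ → ℕ) (t : Tm) :
    subst σ (rename f t) = subst (fun k => σ (f k)) t := by
  induction t generalizing σ f with
  | var k => rfl
  | app a b iha ihb => simp [rename, subst, iha, ihb]
  | lam a ih => simp [rename, subst, ih]; exact subst_ext (liftS_liftR σ f) a
  | bang a ih => simp [rename, subst, ih]
  | der a ih => simp [rename, subst, ih]
  | esub a b iha ihb =>
      simp [rename, subst, iha, ihb]; exact subst_ext (liftS_liftR σ f) a

theorem liftR_liftS (f : ℕ → ℕ) (σ : ℕ → Tm) (k : ℕ) :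
    rename (liftR f) (liftS σ k) = liftS (fun j => rename f (σ j)) k := by
  cases k with
  | zero => simp [liftS, rename, liftR]
  | succ k =>
      simp only [liftS, rename_rename]
      exact rename_ext (fun j => rfl) (σ k)

theorem rename_subst (f : ℕ → ℕ) (σ : ℕ → Tm) (t : Tm) :
    rename f (subst σ t) = subst (fun k => rename f (σ k)) t := by
  induction t generalizing σ f with
  | var k => rfl
  | app a b iha ihb => simp [rename, subst, iha, ihb]
  | lam a ih => simp [rename, subst, ih]; exact subst_ext (liftR_liftS f σ) a
  | bang a ih => simp [rename, subst, ih]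
  | der a ih => simp [rename, subst, ih]
  | esub a b iha ihb =>
      simp [rename, subst, iha, ihb]; exact subst_ext (liftR_liftS f σ) a

theorem liftS_liftS (τ σ : ℕ → Tm) (k : ℕ) :
    subst (liftS τ) (liftS σ k) = liftS (fun j => subst τ (σ j)) k := by
  cases k with
  | zero => simp [liftS, subst]
  | succ k =>
      simp only [liftS, subst_rename]
      exact (rename_subst _ _ _).symm

theorem subst_subst (τ σ : ℕ → Tm) (t : Tm) :
    subst τ (subst σ t) = subst (fun k => subst τ (σ k)) t := by
  induction t generalizing σ τ with
  | var k => rfl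
  | app a b iha ihb => simp [subst, iha, ihb]
  | lam a ih => simp [subst, ih]; exact subst_ext (liftS_liftS τ σ) a
  | bang a ih => simp [subst, ih]
  | der a ih => simp [subst, ih]
  | esub a b iha ihb =>
      simp [subst, iha, ihb]; exact subst_ext (liftS_liftS τ σ) a

theorem rename_eq_subst (f : ℕ → ℕ) (t : Tm) :
    rename f t = subst (fun k => var (f k)) t := by
  induction t generalizing f with
  | var k => rfl
  | app a b iha ihb => simp [rename, subst, iha, ihb]
  | lam a ih =>
      simp [rename, subst, ih]
      exact subst_ext (fun k => by cases k <;> simp [liftS, liftR, rename]) a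
  | bang a ih => simp [rename, subst, ih]
  | der a ih => simp [rename, subst, ih]
  | esub a b iha ihb =>
      simp [rename, subst, iha, ihb]
      exact subst_ext (fun k => by cases k <;> simp [liftS, liftR, rename]) a

theorem liftSn_ge (n : ℕ) (σ : ℕ → Tm) (k : ℕ) :
    (liftS^[n] σ) (k + n) = rename (fun j => j + n) (σ k) := by
  induction n with
  | zero => exact (rename_id _).symm
  | succ n ih =>
      rw [Function.iterate_succ_apply']
      show rename (fun j => j + 1) ((liftS^[n] σ) (k + n)) = _
      rw [ih, rename_rename]
      exact rename_ext (fun j => rfl) (σ k)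

theorem liftSn_shift (n : ℕ) (σ : ℕ → Tm) (u : Tm) :
    subst (liftS^[n] σ) (rename (fun k => k + n) u)
      = rename (fun k => k + n) (subst σ u) := by
  rw [subst_rename, rename_subst]
  exact subst_ext (fun k => liftSn_ge n σ k) u

/-- the substitution underlying `substIn` -/
def sig (n : ℕ) (u : Tm) : ℕ → Tm := fun k =>
  match k with
  | 0 => u
  | k + 1 => var (k + n)

theorem substIn_eq (n : ℕ) (u t : Tm) : substIn n u t = subst (sig n u) t := rfl

theorem liftSn_sig (m j l : ℕ) (v : Tm) (k : ℕ) :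
    (liftS^[j] (sig m v)) (k + (l + 1 + j)) = var (k + (l + m + j)) := by
  have h1 : k + (l + 1 + j) = (k + l + 1) + j := by omega
  rw [h1, liftSn_ge]
  show rename (fun x => x + j) (var (k + l + m)) = _
  simp [rename]; omega

theorem sig_shift (m j l : ℕ) (v u : Tm) :
    subst (liftS^[j] (sig m v)) (rename (fun k => k + (l + 1 + j)) u)
      = rename (fun k => k + (l + m + j)) u := by
  rw [subst_rename, rename_eq_subst]
  exact subst_ext (fun k => liftSn_sig m j l v k) u

theorem sig_sig (m j l : ℕ) (v u a : Tm) :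
    subst (liftS^[j] (sig m v)) (subst (sig (l + 1 + j) u) a)
      = subst (sig (l + m + j) (subst (liftS^[j] (sig m v)) u)) a := by
  rw [subst_subst]
  refine subst_ext (fun k => ?_) a
  cases k with
  | zero => rfl
  | succ k =>
      show subst (liftS^[j] (sig m v)) (var (k + (l + 1 + j))) = var (k + (l + m + j))
      show (liftS^[j] (sig m v)) (k + (l + 1 + j)) = var (k + (l + m + j))
      exact liftSn_sig m j l v k

theorem sig_subst (n : ℕ) (σ : ℕ → Tm) (u a : Tm) :
    subst (liftS^[n] σ) (subst (sig n u) a)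
      = subst (sig n (subst (liftS^[n] σ) u)) (subst (liftS σ) a) := by
  rw [subst_subst, subst_subst]
  refine subst_ext (fun k => ?_) a
  cases k with
  | zero => rfl
  | succ k =>
      show (liftS^[n] σ) (k + n) = subst (sig n _) (rename (fun j => j + 1) (σ k))
      rw [liftSn_ge, subst_rename, rename_eq_subst]
      exact subst_ext (fun j => rfl) (σ k)

theorem plug_append (L₁ L₂ : List Tm) (s : Tm) :
    plug (L₁ ++ L₂) s = plug L₁ (plug L₂ s) := by
  induction L₁ with
  | nil => rfl
  | cons e L ih => simp [plug, ih]

/-- applying a substitution to all elements of a list context -/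
def substL (σ : ℕ → Tm) : List Tm → List Tm
  | [] => []
  | e :: L => subst σ e :: substL (liftS σ) L

theorem substL_length (σ : ℕ → Tm) (L : List Tm) :
    (substL σ L).length = L.length := by
  induction L generalizing σ with
  | nil => rfl
  | cons e L ih => simp [substL, ih]

theorem subst_plug (σ : ℕ → Tm) (L : List Tm) (s : Tm) :
    subst σ (plug L s) = plug (substL σ L) (subst (liftS^[L.length] σ) s) := by
  induction L generalizing σ with
  | nil => rfl
  | cons e L ih =>
      simp only [plug, subst, substL, ih, List.length_cons, Function.iterate_succ_apply]

theorem plug_eq_plug {L L' : List Tm} {s s' : Tm}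
    (hs : ∀ a b, s ≠ esub a b) (hs' : ∀ a b, s' ≠ esub a b) :
    plug L s = plug L' s' → L = L' ∧ s = s' := by
  induction L generalizing L' with
  | nil =>
    cases L' with
    | nil => exact fun h => ⟨rfl, h⟩
    | cons e M => exact fun h => absurd h (hs _ _)
  | cons e M ih =>
    cases L' with
    | nil => exact fun h => absurd h.symm (hs' _ _)
    | cons e' M' =>
      intro h
      obtain ⟨h1, h2⟩ := Tm.esub.inj h
      obtain ⟨h3, h4⟩ := ih h1
      exact ⟨by rw [h3, h2], h4⟩

end Tm

open Tm

theorem root_app_inv {r : Rule} {x y w : Tm} (h : Root r (Tm.app x y) w) :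
    ∃ L a, x = plug L (lam a) ∧ r = .dB ∧
      w = plug L (esub a (rename (· + L.length) y)) := by
  cases h with
  | dB L a u => exact ⟨L, a, rfl, rfl, rfl⟩

theorem root_esub_inv {r : Rule} {x y w : Tm} (h : Root r (Tm.esub x y) w) :
    ∃ L v, y = plug L (bang v) ∧ r = .sb ∧ w = plug L (substIn L.length v x) := by
  cases h with
  | sb L t u => exact ⟨L, u, rfl, rfl, rfl⟩

theorem root_der_inv {r : Rule} {x w : Tm} (h : Root r (Tm.der x) w) :
    ∃ L a, x = plug L (bang a) ∧ r = .db ∧ w = plug L a := by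
  cases h with
  | db L t => exact ⟨L, t, rfl, rfl, rfl⟩

theorem step_bang_inv {r : Rule} {x w : Tm} (h : Step r (Tm.bang x) w) : False := by
  cases h with
  | root hr => cases hr

theorem step_lam_inv {r : Rule} {x w : Tm} (h : Step r (Tm.lam x) w) :
    ∃ x', Step r x x' ∧ w = Tm.lam x' := by
  cases h with
  | root hr => cases hr
  | lam hs => exact ⟨_, hs, rfl⟩

theorem step_app_inv {r : Rule} {x y w : Tm} (h : Step r (Tm.app x y) w) :
    (∃ L a, x = plug L (lam a) ∧ r = .dB ∧
      w = plug L (esub a (rename (· + L.length) y))) ∨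
    (∃ x', Step r x x' ∧ w = Tm.app x' y) ∨
    (∃ y', Step r y y' ∧ w = Tm.app x y') := by
  cases h with
  | root hr => exact Or.inl (root_app_inv hr)
  | appL u hs => exact Or.inr (Or.inl ⟨_, hs, rfl⟩)
  | appR t hs => exact Or.inr (Or.inr ⟨_, hs, rfl⟩)

theorem step_esub_inv {r : Rule} {x y w : Tm} (h : Step r (Tm.esub x y) w) :
    (∃ L v, y = plug L (bang v) ∧ r = .sb ∧ w = plug L (substIn L.length v x)) ∨
    (∃ x', Step r x x' ∧ w = Tm.esub x' y) ∨
    (∃ y', Step r y y' ∧ w = Tm.esub x y') := by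
  cases h with
  | root hr => exact Or.inl (root_esub_inv hr)
  | esubL u hs => exact Or.inr (Or.inl ⟨_, hs, rfl⟩)
  | esubR t hs => exact Or.inr (Or.inr ⟨_, hs, rfl⟩)

theorem step_der_inv {r : Rule} {x w : Tm} (h : Step r (Tm.der x) w) :
    (∃ L a, x = plug L (bang a) ∧ r = .db ∧ w = plug L a) ∨
    (∃ x', Step r x x' ∧ w = Tm.der x') := by
  cases h with
  | root hr => exact Or.inl (root_der_inv hr)
  | der hs => exact Or.inr ⟨_, hs, rfl⟩

theorem root_subst {r : Rule} {t t' : Tm} (σ : ℕ → Tm) (h : Root r t t') :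
    Root r (Tm.subst σ t) (Tm.subst σ t') := by
  cases h with
  | dB L a u =>
      have h1 : subst σ (Tm.app (plug L (lam a)) u)
          = Tm.app (plug (substL σ L) (lam (subst (liftS^[L.length + 1] σ) a))) (subst σ u) := by
        simp [subst, subst_plug, Function.iterate_succ_apply']
      have h2 : subst σ (plug L (esub a (rename (· + L.length) u)))
          = plug (substL σ L) (esub (subst (liftS^[L.length + 1] σ) a)
              (rename (· + L.length) (subst σ u))) := by
        simp [subst_plug, subst, Function.iterate_succ_apply', liftSn_shift]
      rw [h1, h2]
      have h3 := Root.dB (substL σ L) (subst (liftS^[L.length + 1] σ) a) (subst σ u)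
      rwa [substL_length] at h3
  | sb L a u =>
      have h1 : subst σ (Tm.esub a (plug L (bang u)))
          = Tm.esub (subst (liftS σ) a)
              (plug (substL σ L) (bang (subst (liftS^[L.length] σ) u))) := by
        simp [subst, subst_plug]
      have h2 : subst σ (plug L (substIn L.length u a))
          = plug (substL σ L) (substIn L.length (subst (liftS^[L.length] σ) u)
              (subst (liftS σ) a)) := by
        rw [subst_plug, substIn_eq, substIn_eq, sig_subst]
      rw [h1, h2]
      have h3 := Root.sb (substL σ L) (subst (liftS σ) a) (subst (liftS^[L.length] σ) u)
      rwa [substL_length] at h3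
  | db L a =>
      have h1 : subst σ (Tm.der (plug L (bang a)))
          = Tm.der (plug (substL σ L) (bang (subst (liftS^[L.length] σ) a))) := by
        simp [subst, subst_plug]
      rw [h1, subst_plug]
      exact Root.db _ _

theorem step_subst {r : Rule} {t t' : Tm} (σ : ℕ → Tm) (h : Step r t t') :
    Step r (Tm.subst σ t) (Tm.subst σ t') := by
  induction h generalizing σ with
  | root hr => exact .root (root_subst σ hr)
  | appL u hs ih => simp only [subst]; exact .appL _ (ih σ)
  | appR t hs ih => simp only [subst]; exact .appR _ (ih σ)
  | lam hs ih => simp only [subst]; exact .lam (ih (liftS σ))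
  | der hs ih => simp only [subst]; exact .der (ih σ)
  | esubL u hs ih => simp only [subst]; exact .esubL _ (ih (liftS σ))
  | esubR t hs ih => simp only [subst]; exact .esubR _ (ih σ)

theorem step_rename {r : Rule} {t t' : Tm} (f : ℕ → ℕ) (h : Step r t t') :
    Step r (Tm.rename f t) (Tm.rename f t') := by
  rw [rename_eq_subst, rename_eq_subst]
  exact step_subst _ h

theorem step_plug {r : Rule} {s s' : Tm} (L : List Tm) (h : Step r s s') :
    Step r (plug L s) (plug L s') := by
  induction L with
  | nil => exact h
  | cons e L ih => exact .esubL e ih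

theorem step_plug_inv {r : Rule} {L : List Tm} {s w : Tm}
    (h : Step r (plug L s) w) :
    (∃ s', Step r s s' ∧ w = plug L s') ∨
    (∃ L₁ e e' L₂, L = L₁ ++ e :: L₂ ∧ Step r e e' ∧ w = plug (L₁ ++ e' :: L₂) s) ∨
    (r = .sb ∧ ∃ L₁ M v L₂, L = L₁ ++ plug M (bang v) :: L₂ ∧
      w = plug L₁ (plug M (substIn M.length v (plug L₂ s)))) := by
  induction L generalizing w with
  | nil => exact Or.inl ⟨w, h, rfl⟩
  | cons e L ih =>
    simp only [plug] at h
    cases h with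
    | root hr =>
      obtain ⟨M, v, hy, hp, hw⟩ := root_esub_inv hr
      subst hy
      exact Or.inr (Or.inr ⟨hp, [], M, v, L, rfl, hw⟩)
    | esubL _ hs =>
      rcases ih hs with ⟨s', h1, rfl⟩ | ⟨L₁, e₁, e₁', L₂, rfl, h1, rfl⟩ | ⟨hp, L₁, M, v, L₂, rfl, rfl⟩
      · exact Or.inl ⟨s', h1, rfl⟩
      · exact Or.inr (Or.inl ⟨e :: L₁, e₁, e₁', L₂, rfl, h1, rfl⟩)
      · exact Or.inr (Or.inr ⟨hp, e :: L₁, M, v, L₂, rfl, rfl⟩)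
    | esubR _ hs => exact Or.inr (Or.inl ⟨[], e, _, L, rfl, hs, rfl⟩)
theorem root_comm {p₁ p₂ : Rule} {t t₁ t₂ : Tm}
    (h₁ : Root p₁ t t₁) (h₂ : Step p₂ t t₂) :
    t₁ = t₂ ∨ ∃ t₃, Step p₂ t₁ t₃ ∧ Step p₁ t₂ t₃ := by
  cases h₁ with
  | dB L a u =>
    rcases step_app_inv h₂ with ⟨L', b, hx, rfl, rfl⟩ | ⟨x', hs, rfl⟩ | ⟨u', hs, rfl⟩
    · -- two root dB steps: equal
      obtain ⟨rfl, hb⟩ := plug_eq_plug (fun _ _ h => Tm.noConfusion h)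
        (fun _ _ h => Tm.noConfusion h) hx
      obtain rfl := Tm.lam.inj hb
      exact Or.inl rfl
    · -- a step inside `plug L (lam a)`
      rcases step_plug_inv hs with ⟨s', h1, rfl⟩ | ⟨L₁, e, e', L₂, rfl, h1, rfl⟩ |
        ⟨rfl, L₁, M, v, L₂, rfl, rfl⟩
      · -- step inside `lam a`
        obtain ⟨a', ha, rfl⟩ := step_lam_inv h1
        refine Or.inr ⟨plug L (esub a' (rename (· + L.length) u)),
          step_plug L (.esubL _ ha), .root (Root.dB L a' u)⟩
      · -- step inside an element of L
        refine Or.inr ⟨plug (L₁ ++ e' :: L₂) (esub a (rename (· + (L₁ ++ e :: L₂).length) u)),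
          ?_, ?_⟩
        · simp only [plug_append, plug]
          exact step_plug L₁ (.esubR _ h1)
        · have h3 := Step.root (Root.dB (L₁ ++ e' :: L₂) a u)
          simp only [List.length_append, List.length_cons] at h3 ⊢
          exact h3
      · -- root s! step at a spine node of L (at-a-distance overlap)
        have hcomp : substIn M.length v
              (plug L₂ (esub a (rename (· + (L₁.length + 1 + L₂.length)) u)))
            = plug (substL (sig M.length v) L₂)
                (esub (subst (liftS^[L₂.length + 1] (sig M.length v)) a)
                  (rename (· + (L₁.length + M.length + L₂.length)) u)) := by
          rw [substIn_eq, subst_plug]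
          simp only [subst]
          rw [Function.iterate_succ_apply' liftS L₂.length (sig M.length v), sig_shift]
        have hsub : substIn M.length v (plug L₂ (lam a))
            = plug (substL (sig M.length v) L₂)
                (lam (subst (liftS^[L₂.length + 1] (sig M.length v)) a)) := by
          rw [substIn_eq, subst_plug]
          simp only [subst]
          rw [Function.iterate_succ_apply' liftS L₂.length (sig M.length v)]
        refine Or.inr ⟨plug L₁ (plug M (plug (substL (sig M.length v) L₂)
            (esub (subst (liftS^[L₂.length + 1] (sig M.length v)) a)
              (rename (· + (L₁.length + M.length + L₂.length)) u)))), ?_, ?_⟩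
        · have hlen : (L₁ ++ plug M (bang v) :: L₂).length = L₁.length + 1 + L₂.length := by
            simp; omega
          rw [hlen]
          simp only [plug_append, plug]
          refine step_plug L₁ ?_
          have h3 := Step.root (Root.sb M
            (plug L₂ (esub a (rename (· + (L₁.length + 1 + L₂.length)) u))) v)
          rwa [hcomp] at h3
        · have h3 := Step.root (Root.dB (L₁ ++ (M ++ substL (sig M.length v) L₂))
            (subst (liftS^[L₂.length + 1] (sig M.length v)) a) u)
          have hlen2 : (L₁ ++ (M ++ substL (sig M.length v) L₂)).length
              = L₁.length + M.length + L₂.length := by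
            simp [substL_length]; omega
          rw [hlen2] at h3
          simpa [plug_append, hsub] using h3
    · -- a step inside u
      refine Or.inr ⟨plug L (esub a (rename (· + L.length) u')),
        step_plug L (.esubR _ (step_rename _ hs)), .root (Root.dB L a u')⟩
  | sb L a u =>
    rcases step_esub_inv h₂ with ⟨L', v, hy, rfl, rfl⟩ | ⟨a', hs, rfl⟩ | ⟨y', hs, rfl⟩
    · -- two root s! steps: equal
      obtain ⟨rfl, hb⟩ := plug_eq_plug (fun _ _ h => Tm.noConfusion h)
        (fun _ _ h => Tm.noConfusion h) hy
      obtain rfl := Tm.bang.inj hb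
      exact Or.inl rfl
    · -- a step inside a
      refine Or.inr ⟨plug L (substIn L.length u a'), ?_, .root (Root.sb L a' u)⟩
      refine step_plug L ?_
      rw [substIn_eq, substIn_eq]
      exact step_subst _ hs
    · -- a step inside `plug L (bang u)`
      rcases step_plug_inv hs with ⟨s', h1, rfl⟩ | ⟨L₁, e, e', L₂, rfl, h1, rfl⟩ |
        ⟨rfl, L₁, M, v, L₂, rfl, rfl⟩
      · exact absurd h1 (fun h => step_bang_inv h)
      · -- step inside an element of L
        refine Or.inr ⟨plug (L₁ ++ e' :: L₂) (substIn (L₁ ++ e :: L₂).length u a), ?_, ?_⟩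
        · simp only [plug_append, plug]
          exact step_plug L₁ (.esubR _ h1)
        · have h3 := Step.root (Root.sb (L₁ ++ e' :: L₂) a u)
          simp only [List.length_append, List.length_cons] at h3 ⊢
          exact h3
      · -- root s! step at a spine node of L (s!/s! at a distance)
        have hbang : substIn M.length v (plug L₂ (bang u))
            = plug (substL (sig M.length v) L₂)
                (bang (subst (liftS^[L₂.length] (sig M.length v)) u)) := by
          rw [substIn_eq, subst_plug]; simp only [subst]
        have hcomp : substIn M.length v
              (plug L₂ (substIn (L₁.length + 1 + L₂.length) u a))
            = plug (substL (sig M.length v) L₂)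
                (substIn (L₁.length + M.length + L₂.length)
                  (subst (liftS^[L₂.length] (sig M.length v)) u) a) := by
          simp only [substIn_eq]
          rw [subst_plug, sig_sig]
        refine Or.inr ⟨plug L₁ (plug M (plug (substL (sig M.length v) L₂)
            (substIn (L₁.length + M.length + L₂.length)
              (subst (liftS^[L₂.length] (sig M.length v)) u) a))), ?_, ?_⟩
        · have hlen : (L₁ ++ plug M (bang v) :: L₂).length = L₁.length + 1 + L₂.length := by
            simp; omega
          rw [hlen]
          simp only [plug_append, plug]
          refine step_plug L₁ ?_
          have h3 := Step.root (Root.sb M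
            (plug L₂ (substIn (L₁.length + 1 + L₂.length) u a)) v)
          rwa [hcomp] at h3
        · have h3 := Step.root (Root.sb (L₁ ++ (M ++ substL (sig M.length v) L₂)) a
            (subst (liftS^[L₂.length] (sig M.length v)) u))
          have hlen2 : (L₁ ++ (M ++ substL (sig M.length v) L₂)).length
              = L₁.length + M.length + L₂.length := by
            simp [substL_length]; omega
          rw [hlen2] at h3
          simpa [plug_append, hbang] using h3
  | db L a =>
    rcases step_der_inv h₂ with ⟨L', b, hx, rfl, rfl⟩ | ⟨x', hs, rfl⟩
    · obtain ⟨rfl, hb⟩ := plug_eq_plug (fun _ _ h => Tm.noConfusion h)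
        (fun _ _ h => Tm.noConfusion h) hx
      obtain rfl := Tm.bang.inj hb
      exact Or.inl rfl
    · rcases step_plug_inv hs with ⟨s', h1, rfl⟩ | ⟨L₁, e, e', L₂, rfl, h1, rfl⟩ |
        ⟨rfl, L₁, M, v, L₂, rfl, rfl⟩
      · exact absurd h1 (fun h => step_bang_inv h)
      · refine Or.inr ⟨plug (L₁ ++ e' :: L₂) a, ?_, .root (Root.db _ a)⟩
        simp only [plug_append, plug]
        exact step_plug L₁ (.esubR _ h1)
      · have hbang : substIn M.length v (plug L₂ (bang a))
            = plug (substL (sig M.length v) L₂)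
                (bang (subst (liftS^[L₂.length] (sig M.length v)) a)) := by
          rw [substIn_eq, subst_plug]; simp only [subst]
        have hcomp : substIn M.length v (plug L₂ a)
            = plug (substL (sig M.length v) L₂)
                (subst (liftS^[L₂.length] (sig M.length v)) a) := by
          rw [substIn_eq, subst_plug]
        refine Or.inr ⟨plug L₁ (plug M (plug (substL (sig M.length v) L₂)
            (subst (liftS^[L₂.length] (sig M.length v)) a))), ?_, ?_⟩
        · simp only [plug_append, plug]
          refine step_plug L₁ ?_
          have h3 := Step.root (Root.sb M (plug L₂ a) v)
          rwa [hcomp] at h3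
        · have h3 := Step.root (Root.db (L₁ ++ (M ++ substL (sig M.length v) L₂))
            (subst (liftS^[L₂.length] (sig M.length v)) a))
          simpa [plug_append, hbang] using h3
/-- **Weak diamond property** (Lemma 1): if `t →_{p₁} t₁` and `t →_{p₂} t₂`
with `t₁ ≠ t₂`, then there exists `t₃` such that `t₁ →_{p₂} t₃` and
`t₂ →_{p₁} t₃`. -/
theorem weak_diamond {t t₁ t₂ : Tm} {p₁ p₂ : Rule}
    (h₁ : Step p₁ t t₁) (h₂ : Step p₂ t t₂) (hne : t₁ ≠ t₂) :
    ∃ t₃ : Tm, Step p₂ t₁ t₃ ∧ Step p₁ t₂ t₃ := by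
  revert t₂
  induction h₁ with
  | root hr =>
    intro t₂ h₂ hne
    rcases root_comm hr h₂ with h | h
    · exact absurd h hne
    · exact h
  | @appL x x' u hs ih =>
    intro t₂ h₂ hne
    rcases step_app_inv h₂ with ⟨L, b, rfl, rfl, rfl⟩ | ⟨b, hs₂, rfl⟩ | ⟨u', hs₂, rfl⟩
    · rcases root_comm (Root.dB L b u) (Step.appL u hs) with h | ⟨t₃, h3, h4⟩
      · exact absurd h.symm hne
      · exact ⟨t₃, h4, h3⟩
    · by_cases hb : x' = b
      · subst hb; exact absurd rfl hne
      · obtain ⟨t₃, h3, h4⟩ := ih hs₂ hb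
        exact ⟨Tm.app t₃ u, .appL u h3, .appL u h4⟩
    · exact ⟨Tm.app x' u', .appR x' hs₂, .appL u' hs⟩
  | @appR y y' x hs ih =>
    intro t₂ h₂ hne
    rcases step_app_inv h₂ with ⟨L, b, rfl, rfl, rfl⟩ | ⟨b, hs₂, rfl⟩ | ⟨u', hs₂, rfl⟩
    · rcases root_comm (Root.dB L b y) (Step.appR _ hs) with h | ⟨t₃, h3, h4⟩
      · exact absurd h.symm hne
      · exact ⟨t₃, h4, h3⟩
    · exact ⟨Tm.app b y', .appL y' hs₂, .appR b hs⟩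
    · by_cases hb : y' = u'
      · subst hb; exact absurd rfl hne
      · obtain ⟨t₃, h3, h4⟩ := ih hs₂ hb
        exact ⟨Tm.app x t₃, .appR x h3, .appR x h4⟩
  | @lam x x' hs ih =>
    intro t₂ h₂ hne
    obtain ⟨b, hs₂, rfl⟩ := step_lam_inv h₂
    by_cases hb : x' = b
    · subst hb; exact absurd rfl hne
    · obtain ⟨t₃, h3, h4⟩ := ih hs₂ hb
      exact ⟨Tm.lam t₃, .lam h3, .lam h4⟩
  | @der x x' hs ih =>
    intro t₂ h₂ hne
    rcases step_der_inv h₂ with ⟨L, b, rfl, rfl, rfl⟩ | ⟨b, hs₂, rfl⟩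
    · rcases root_comm (Root.db L b) (Step.der hs) with h | ⟨t₃, h3, h4⟩
      · exact absurd h.symm hne
      · exact ⟨t₃, h4, h3⟩
    · by_cases hb : x' = b
      · subst hb; exact absurd rfl hne
      · obtain ⟨t₃, h3, h4⟩ := ih hs₂ hb
        exact ⟨Tm.der t₃, .der h3, .der h4⟩
  | @esubL x x' y hs ih =>
    intro t₂ h₂ hne
    rcases step_esub_inv h₂ with ⟨L, v, rfl, rfl, rfl⟩ | ⟨b, hs₂, rfl⟩ | ⟨b, hs₂, rfl⟩
    · rcases root_comm (Root.sb L x v) (Step.esubL _ hs) with h | ⟨t₃, h3, h4⟩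
      · exact absurd h.symm hne
      · exact ⟨t₃, h4, h3⟩
    · by_cases hb : x' = b
      · subst hb; exact absurd rfl hne
      · obtain ⟨t₃, h3, h4⟩ := ih hs₂ hb
        exact ⟨Tm.esub t₃ y, .esubL y h3, .esubL y h4⟩
    · exact ⟨Tm.esub x' b, .esubR x' hs₂, .esubL b hs⟩
  | @esubR y y' x hs ih =>
    intro t₂ h₂ hne
    rcases step_esub_inv h₂ with ⟨L, v, rfl, rfl, rfl⟩ | ⟨b, hs₂, rfl⟩ | ⟨b, hs₂, rfl⟩
    · rcases root_comm (Root.sb L x v) (Step.esubR x hs) with h | ⟨t₃, h3, h4⟩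
      · exact absurd h.symm hne
      · exact ⟨t₃, h4, h3⟩
    · exact ⟨Tm.esub b y', .esubL y' hs₂, .esubR b hs⟩
    · by_cases hb : y' = b
      · subst hb; exact absurd rfl hne
      · obtain ⟨t₃, h3, h4⟩ := ih hs₂ hb
        exact ⟨Tm.esub x t₃, .esubR x h3, .esubR x h4⟩
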